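/- arXiv:2002.08836 — 3 statements merged into one kernel-verified Lean document; each statement's English description precedes it below -/
import Mathlib

section
/- If n and a are coprime integers with 0 < a < n, and [b_1, ..., b_s] is the Hirzebruch–Jung continued fraction expansion of n²/(na−1) (so each b_i ≥ 2), then b_1 + b_2 + ... + b_s = 3s + 1. -/
/-- Hirzebruch–Jung continued fraction value of a list: [b₁,...,bₛ] = b₁ - 1/[b₂,...,bₛ],
with the convention hj [] = 0 (so hj [b] = b since (0:ℚ)⁻¹ = 0). -/
def hj : List ℤ → ℚ
  | [] => 0
  | b :: l => (b : ℚ) - (hj l)⁻¹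

/-- Negative continuant. -/
def K : List ℤ → ℤ
  | [] => 1
  | [b] => b
  | b :: c :: l => b * K (c :: l) - K l

/-- K of the tail, with convention 0 for the empty list. -/
def K0 : List ℤ → ℤ
  | [] => 0
  | _ :: l => K l

@[simp] lemma K_nil : K [] = 1 := rfl
@[simp] lemma K0_nil : K0 [] = 0 := rfl
@[simp] lemma K0_cons (b : ℤ) (l : List ℤ) : K0 (b :: l) = K l := rfl

lemma K_cons (b : ℤ) (l : List ℤ) : K (b :: l) = b * K l - K0 l := by
  cases l <;> simp [K]

lemma K_pos : ∀ l : List ℤ, (∀ x ∈ l, 2 ≤ x) → K0 l < K l ∧ 0 < K l := by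
  intro l h
  induction l with
  | nil => simp
  | cons b t ih =>
    have hb : 2 ≤ b := h b (by simp)
    have ih' := ih (fun x hx => h x (by simp [hx]))
    rw [K_cons]
    constructor <;> simp <;> nlinarith [ih'.1, ih'.2]

lemma hj_eq : ∀ l : List ℤ, (∀ x ∈ l, 2 ≤ x) → hj l = (K l : ℚ) / (K0 l) := by
  intro l h
  induction l with
  | nil => simp [hj]
  | cons b t ih =>
    have ih' := ih (fun x hx => h x (by simp [hx]))
    rw [show hj (b :: t) = (b : ℚ) - (hj t)⁻¹ from rfl, ih']
    cases t with
    | nil => simp [K]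
    | cons c s =>
      have hps : K0 s < K s ∧ 0 < K s := K_pos s (fun x hx => h x (by simp [hx]))
      have hp := K_pos (c :: s) (fun x hx => h x (by simp [hx]))
      have h1 : (0:ℚ) < (K (c :: s) : ℚ) := by exact_mod_cast hp.2
      have h2 : (0:ℚ) < (K0 (c :: s) : ℚ) := by
        rw [K0_cons]; exact_mod_cast hps.2
      rw [K_cons b (c :: s), K0_cons b (c :: s), inv_div]
      push_cast
      field_simp

lemma hj_gt_one : ∀ l : List ℤ, l ≠ [] → (∀ x ∈ l, 2 ≤ x) → 1 < hj l := by
  intro l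
  induction l with
  | nil => simp
  | cons b t ih =>
    intro _ h
    have hb : 2 ≤ b := h b (by simp)
    rw [show hj (b :: t) = (b : ℚ) - (hj t)⁻¹ from rfl]
    rcases eq_or_ne t [] with rfl | ht
    · simp [hj]
      have : (2:ℚ) ≤ (b:ℚ) := by exact_mod_cast hb
      linarith
    · have h1 := ih ht (fun x hx => h x (by simp [hx]))
      have h2 : (0:ℚ) < (hj t)⁻¹ := by positivity
      have h3 : (hj t)⁻¹ < 1 := by
        rw [inv_lt_one_iff₀]; right; exact h1
      have : (2:ℚ) ≤ (b:ℚ) := by exact_mod_cast hb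
      linarith

lemma hj_inv_bounds (l : List ℤ) (h : ∀ x ∈ l, 2 ≤ x) :
    0 ≤ (hj l)⁻¹ ∧ (hj l)⁻¹ < 1 ∧ (l ≠ [] → 0 < (hj l)⁻¹) := by
  rcases eq_or_ne l [] with rfl | hne
  · simp [hj]
  · have h1 := hj_gt_one l hne h
    refine ⟨by positivity, by rw [inv_lt_one_iff₀]; right; exact h1, fun _ => by positivity⟩

lemma hj_inj : ∀ b c : List ℤ, (∀ x ∈ b, 2 ≤ x) → (∀ x ∈ c, 2 ≤ x) →
    hj b = hj c → b = c := by
  intro b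
  induction b with
  | nil =>
    intro c _ hc h
    cases c with
    | nil => rfl
    | cons y m =>
      have := hj_gt_one (y :: m) (by simp) hc
      rw [← h] at this; simp [hj] at this; linarith
  | cons x l ih =>
    intro c hb hc h
    cases c with
    | nil =>
      have := hj_gt_one (x :: l) (by simp) hb
      rw [h] at this; simp [hj] at this; linarith
    | cons y m =>
      have hl : ∀ z ∈ l, 2 ≤ z := fun z hz => hb z (List.mem_cons_of_mem _ hz)
      have hm : ∀ z ∈ m, 2 ≤ z := fun z hz => hc z (List.mem_cons_of_mem _ hz)
      obtain ⟨hl0, hl1, hlpos⟩ := hj_inv_bounds l hl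
      obtain ⟨hm0, hm1, hmpos⟩ := hj_inv_bounds m hm
      have heq : (x : ℚ) - (hj l)⁻¹ = (y : ℚ) - (hj m)⁻¹ := h
      have hxy : x = y := by
        have h1 : (x : ℚ) - (y : ℚ) < 1 := by linarith
        have h2 : (-1 : ℚ) < (x : ℚ) - (y : ℚ) := by linarith
        have h1' : x - y < 1 := by exact_mod_cast h1
        have h2' : (-1 : ℤ) < x - y := by exact_mod_cast h2
        omega
      subst hxy
      have hinv : (hj l)⁻¹ = (hj m)⁻¹ := by linarith
      rcases eq_or_ne l [] with rfl | hlne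
      · rcases eq_or_ne m [] with rfl | hmne
        · rfl
        · exfalso
          have := hmpos hmne
          rw [← hinv] at this; simp [hj] at this
      · rcases eq_or_ne m [] with rfl | hmne
        · exfalso
          have := hlpos hlne
          rw [hinv] at this; simp [hj] at this
        · have : hj l = hj m := inv_inj.mp hinv
          rw [ih m hl hm this]

theorem Kapp : ∀ (l : List ℤ) (x : ℤ), l ≠ [] → K (l ++ [x]) = x * K l - K l.dropLast
  | [], _, h => absurd rfl h
  | [a], x, _ => by simp [K]; ring
  | [a, b], x, _ => by simp [K]; ring
  | a :: b :: c :: m, x, _ => by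
    have ih1 := Kapp (b :: c :: m) x (by simp)
    have ih2 := Kapp (c :: m) x (by simp)
    simp only [List.cons_append, List.dropLast_cons₂] at ih1 ih2 ⊢
    rw [show K (a :: b :: c :: (m ++ [x])) = a * K (b :: c :: (m ++ [x])) - K (c :: (m ++ [x])) from rfl,
        ih1, ih2,
        show K (a :: b :: c :: m) = a * K (b :: c :: m) - K (c :: m) from rfl,
        show K (a :: b :: (c :: m).dropLast) = a * K (b :: (c :: m).dropLast) - K ((c :: m).dropLast) from rfl]
    ring

lemma Kinc : ∀ (d : List ℤ) (z : ℤ), K (d ++ [z + 1]) = K (d ++ [z]) + K d := by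
  intro d z
  rcases eq_or_ne d [] with rfl | h
  · simp [K]
  · rw [Kapp d _ h, Kapp d _ h]; ring

theorem Kdet : ∀ (l : List ℤ), 2 ≤ l.length →
    K l * K l.tail.dropLast = K l.tail * K l.dropLast - 1
  | [], h => by simp at h
  | [a], h => by simp at h
  | [a, b], _ => by simp [K]; ring
  | a :: b :: c :: m, _ => by
    have ih := Kdet (b :: c :: m) (by simp)
    simp only [List.tail_cons, List.dropLast_cons₂] at ih ⊢
    rw [show K (a :: b :: c :: m) = a * K (b :: c :: m) - K (c :: m) from rfl,
        show K (a :: b :: (c :: m).dropLast) = a * K (b :: (c :: m).dropLast) - K ((c :: m).dropLast) from rfl]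
    linear_combination ih

lemma K_inc_head (w : ℤ) (l : List ℤ) : K ((w + 1) :: l) = K (w :: l) + K l := by
  rw [K_cons, K_cons]; ring

lemma exists_chain : ∀ (N : ℕ) (n a : ℤ), n.toNat ≤ N → IsCoprime n a → 0 < a → a < n →
    ∃ c : List ℤ, c ≠ [] ∧ (∀ x ∈ c, 2 ≤ x) ∧ K c = n ^ 2 ∧ K0 c = n * a - 1 ∧
      K c.dropLast = n * (n - a) - 1 ∧ c.sum = 3 * c.length + 1 := by
  intro N
  induction N with
  | zero => intro n a hN _ ha han; omega
  | succ N ih =>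
    intro n a hN hcop ha han
    by_cases hn2 : n = 2
    · subst hn2
      have ha1 : a = 1 := by omega
      subst ha1
      refine ⟨[4], by simp, by decide, ?_, ?_, ?_, ?_⟩ <;> norm_num [K, K0]
    · have hn3 : 3 ≤ n := by omega
      have hne2 : 2 * a ≠ n := by
        intro hh
        obtain ⟨u, v, huv⟩ := hcop
        have hdvd : a ∣ 1 := ⟨2 * u + v, by rw [← huv, ← hh]; ring⟩
        have := Int.le_of_dvd one_pos hdvd
        omega
      rcases lt_or_gt_of_ne hne2 with hlt | hgt
      · -- 2a < n : parent (n - a, a)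
        have hcop' : IsCoprime (n - a) a := by
          obtain ⟨u, v, huv⟩ := hcop
          exact ⟨u, v + u, by linear_combination huv⟩
        obtain ⟨c, hcne, hent, hK, hK0, hKd, hsum⟩ :=
          ih (n - a) a (by omega) hcop' ha (by omega)
        obtain ⟨x, t, rfl⟩ := List.exists_cons_of_ne_nil hcne
        rcases List.eq_nil_or_concat t with rfl | ⟨s, z, rfl⟩
        · -- parent chain is a singleton, so (n-a, a) = (2, 1), n = 3
          simp only [K0_cons, K_nil] at hK0
          have h2 : (n - a) * a = 2 := by omega
          have hdvd : a ∣ 2 := ⟨n - a, by linarith⟩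
          have ha2 : a ≤ 2 := Int.le_of_dvd (by norm_num) hdvd
          have hna : a = 1 ∧ n = 3 := by
            rcases (by omega : a = 1 ∨ a = 2) with h1 | h1 <;> subst h1 <;> omega
          obtain ⟨rfl, rfl⟩ := hna
          refine ⟨[5, 2], by simp, by decide, ?_, ?_, ?_, ?_⟩ <;> norm_num [K, K0]
        · -- parent chain c = x :: (s ++ [z]) with length ≥ 2
          simp only [List.concat_eq_append] at hent hK hK0 hKd hsum
          simp only [K0_cons] at hK0
          have hKd' : K (x :: s) = (n - a) * ((n - a) - a) - 1 := by
            rw [show (x :: (s ++ [z])).dropLast = x :: s from by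
              rw [← List.cons_append, List.dropLast_concat]] at hKd
            exact hKd
          have det := Kdet (x :: (s ++ [z])) (by simp)
          simp only [List.tail_cons, List.dropLast_concat] at det
          rw [show (x :: (s ++ [z])).dropLast = x :: s from by
              rw [← List.cons_append, List.dropLast_concat], hK, hK0, hKd'] at det
          have hKm : K s = a * (n - a) - a ^ 2 - 1 := by
            have hp2 : ((n - a) ^ 2 : ℤ) ≠ 0 := pow_ne_zero _ (by omega)
            apply mul_left_cancel₀ hp2
            linear_combination det
          refine ⟨(x + 1) :: ((s ++ [z]) ++ [2]), by simp, ?_, ?_, ?_, ?_, ?_⟩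
          · intro w hw
            rcases List.mem_cons.mp hw with rfl | hw'
            · have := hent x (by simp); omega
            · rcases List.mem_append.mp hw' with hw2 | hw3
              · exact hent w (by simp [hw2])
              · simp only [List.mem_singleton] at hw3; omega
          · rw [show (x + 1) :: ((s ++ [z]) ++ [2]) = ((x + 1) :: (s ++ [z])) ++ [2] from rfl,
              Kapp _ 2 (by simp),
              show ((x + 1) :: (s ++ [z])).dropLast = (x + 1) :: s from by
                rw [← List.cons_append, List.dropLast_concat],
              K_inc_head x (s ++ [z]), K_inc_head x s, hK, hK0, hKd', hKm]
            ring
          · rw [K0_cons, Kapp _ 2 (by simp), List.dropLast_concat, hK0, hKm]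
            ring
          · rw [show ((x + 1) :: ((s ++ [z]) ++ [2])).dropLast = (x + 1) :: (s ++ [z]) from by
                rw [show (x + 1) :: ((s ++ [z]) ++ [2]) = ((x + 1) :: (s ++ [z])) ++ [2] from rfl,
                  List.dropLast_concat],
              K_inc_head x (s ++ [z]), hK, hK0]
            ring
          · simp only [List.sum_cons, List.sum_append, List.sum_nil, List.length_cons,
              List.length_append, List.length_nil] at hsum ⊢
            push_cast at hsum ⊢
            omega
      · -- 2a > n : parent (a, 2a - n)
        have hcop' : IsCoprime a (2 * a - n) := by
          obtain ⟨u, v, huv⟩ := hcop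
          exact ⟨v + 2 * u, -u, by linear_combination huv⟩
        obtain ⟨c, hcne, hent, hK, hK0, hKd, hsum⟩ :=
          ih a (2 * a - n) (by omega) hcop' (by omega) (by omega)
        obtain ⟨x, t, rfl⟩ := List.exists_cons_of_ne_nil hcne
        rcases List.eq_nil_or_concat t with rfl | ⟨s, z, rfl⟩
        · -- parent chain is a singleton, so (a, 2a-n) = (2, 1), n = 3, a = 2
          simp only [K0_cons, K_nil] at hK0
          have h2 : a * (2 * a - n) = 2 := by omega
          have hdvd : a ∣ 2 := ⟨2 * a - n, by linarith⟩
          have ha2 : a ≤ 2 := Int.le_of_dvd (by norm_num) hdvd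
          have hna : a = 2 ∧ n = 3 := by
            rcases (by omega : a = 1 ∨ a = 2) with h1 | h1 <;> subst h1 <;> omega
          obtain ⟨rfl, rfl⟩ := hna
          refine ⟨[2, 5], by simp, by decide, ?_, ?_, ?_, ?_⟩ <;> norm_num [K, K0]
        · -- parent chain c = x :: (s ++ [z]) with length ≥ 2
          simp only [List.concat_eq_append] at hent hK hK0 hKd hsum
          simp only [K0_cons] at hK0
          have hKd' : K (x :: s) = a * (a - (2 * a - n)) - 1 := by
            rw [show (x :: (s ++ [z])).dropLast = x :: s from by
              rw [← List.cons_append, List.dropLast_concat]] at hKd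
            exact hKd
          have det := Kdet (x :: (s ++ [z])) (by simp)
          simp only [List.tail_cons, List.dropLast_concat] at det
          rw [show (x :: (s ++ [z])).dropLast = x :: s from by
              rw [← List.cons_append, List.dropLast_concat], hK, hK0, hKd'] at det
          have hKm : K s = (2 * a - n) * (n - a) - 1 := by
            have hp2 : (a ^ 2 : ℤ) ≠ 0 := pow_ne_zero _ (by omega)
            apply mul_left_cancel₀ hp2
            linear_combination det
          have hKL : K ((x :: s) ++ [z + 1]) = K (x :: (s ++ [z])) + K (x :: s) := by
            rw [Kinc (x :: s) z]; rfl
          have hK0L : K (s ++ [z + 1]) = K (s ++ [z]) + K s := Kinc s z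
          refine ⟨2 :: ((x :: s) ++ [z + 1]), by simp, ?_, ?_, ?_, ?_, ?_⟩
          · intro w hw
            rcases List.mem_cons.mp hw with rfl | hw'
            · omega
            · rcases List.mem_append.mp hw' with hw2 | hw3
              · rcases List.mem_cons.mp hw2 with h | hws
                · rw [h]; exact hent x (by simp)
                · exact hent w (by simp [hws])
              · simp only [List.mem_singleton] at hw3
                have := hent z (by simp)
                omega
          · rw [K_cons]
            simp only [List.cons_append] at hKL ⊢
            rw [K0_cons, hKL, hK0L, hK, hK0, hKd', hKm]
            ring
          · rw [K0_cons, hKL, hK, hKd']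
            ring
          · rw [show (2 :: ((x :: s) ++ [z + 1])).dropLast = 2 :: (x :: s) from by
                rw [show 2 :: ((x :: s) ++ [z + 1]) = (2 :: (x :: s)) ++ [z + 1] from rfl,
                  List.dropLast_concat],
              K_cons, K0_cons, hKd', hKm]
            ring
          · simp only [List.sum_cons, List.sum_append, List.sum_nil, List.length_cons,
              List.length_append, List.length_nil] at hsum ⊢
            push_cast at hsum ⊢
            omega

/-- If [b₁,...,bₛ] is the HJ continued fraction of n²/(na−1) for coprime 0 < a < n,
then b₁ + ⋯ + bₛ = 3s + 1. -/
theorem wahl_chain_sum (n a : ℤ) (hcop : IsCoprime n a) (ha : 0 < a) (han : a < n)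
    (b : List ℤ) (hb2 : ∀ x ∈ b, 2 ≤ x)
    (hval : hj b = (n : ℚ)^2 / ((n : ℚ) * a - 1)) :
    b.sum = 3 * b.length + 1 := by
  obtain ⟨c, hcne, hent, hK, hK0, hKd, hsum⟩ :=
    exists_chain n.toNat n a le_rfl hcop ha han
  have hc : hj c = (n : ℚ)^2 / ((n : ℚ) * a - 1) := by
    rw [hj_eq c hent, hK, hK0]
    push_cast
    ring
  have hbc := hj_inj b c hb2 hent (hval.trans hc.symm)
  rw [hbc]
  exact hsum
end

section
/- In the polynomial ring ℚ[x, u, v], with y1 = u² + 2xv, y2 = x(u − v), and y3 = v² + 2xu, the row vector (1, u, v, uv) annihilates the 4×4 matrix B whose columns are (−y2, x, −x, 0)ᵗ, (x·y1, −y2, −2x², −x)ᵗ, (−x·y3, 2x², −y2, x)ᵗ, and (2x²(y1 − y3), −x·y3 + 4x³, x·y1 − 4x³, −y2)ᵗ; that is, (1, u, v, uv)·B = 0. -/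
open MvPolynomial

/-- In ℚ[x,u,v], with y1 = u²+2xv, y2 = x(u−v), y3 = v²+2xu, the vector (1,u,v,uv)
annihilates the matrix B_{y2}. -/
theorem vec_annihilates_By2 :
    let R := MvPolynomial (Fin 3) ℚ
    let x : R := X 0
    let u : R := X 1
    let v : R := X 2
    let y1 : R := u ^ 2 + 2 * x * v
    let y2 : R := x * (u - v)
    let y3 : R := v ^ 2 + 2 * x * u
    let B : Matrix (Fin 4) (Fin 4) R :=
      Matrix.of ![![-y2, x * y1, -(x * y3), 2 * x ^ 2 * (y1 - y3)],
                  ![x, -y2, 2 * x ^ 2, -(x * y3) + 4 * x ^ 3],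
                  ![-x, -(2 * x ^ 2), -y2, x * y1 - 4 * x ^ 3],
                  ![0, -x, x, -y2]]
    Matrix.vecMul ![1, u, v, u * v] B = 0 := by
  intro R x u v y1 y2 y3 B
  funext i
  fin_cases i <;>
    simp [B, Matrix.vecMul, dotProduct, Fin.sum_univ_succ, y1, y2, y3] <;>
    ring
end

section
/- Let n, a be coprime integers with 0 < a < n, and let n²/(na−1) = [b_1, ..., b_s] be the Hirzebruch–Jung continued fraction. Define the intersection matrix M by M_{ii} = −b_i, M_{i,i+1} = M_{i+1,i} = 1, and M_{ij} = 0 otherwise, and let (d_1, ..., d_s) be the unique rational solution of the linear system Σ_j M_{ij}·d_j = b_i − 2 for all i. Then Σ_i d_i·(b_i − 2) = −s. -/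
namespace WahlAux


structure M2 where
  a : ℤ
  b : ℤ
  c : ℤ
  d : ℤ

def M2.mul (X Y : M2) : M2 :=
  ⟨X.a*Y.a + X.b*Y.c, X.a*Y.b + X.b*Y.d, X.c*Y.a + X.d*Y.c, X.c*Y.b + X.d*Y.d⟩

def mm (x : ℤ) : M2 := ⟨x, -1, 1, 0⟩

def mp : List ℤ → M2
  | [] => ⟨1,0,0,1⟩
  | x :: t => (mm x).mul (mp t)

lemma M2.mul_assoc (X Y Z : M2) : (X.mul Y).mul Z = X.mul (Y.mul Z) := by
  simp only [M2.mul, M2.mk.injEq]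
  refine ⟨by ring, by ring, by ring, by ring⟩

lemma mp_one_mul (Y : M2) : (M2.mk 1 0 0 1).mul Y = Y := by
  cases Y; simp [M2.mul]

lemma mp_append (l m : List ℤ) : mp (l ++ m) = (mp l).mul (mp m) := by
  induction l with
  | nil => simp [mp, mp_one_mul]
  | cons x t ih => simp [mp, ih, M2.mul_assoc]

def incHead : List ℤ → List ℤ
  | [] => []
  | x :: t => (x+1) :: t

def incLast : List ℤ → List ℤ
  | [] => []
  | [x] => [x+1]
  | x :: y :: t => x :: incLast (y :: t)

lemma mp_incHead (x : ℤ) (t : List ℤ) :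
    mp (incHead (x :: t)) = (M2.mk 1 1 0 1).mul (mp (x :: t)) := by
  show mp ((x+1) :: t) = _
  show (mm (x+1)).mul (mp t) = _
  rw [show mp (x :: t) = (mm x).mul (mp t) from rfl, ← M2.mul_assoc]
  congr 1
  simp [M2.mul, mm]

lemma mp_incLast : ∀ l : List ℤ, l ≠ [] → mp (incLast l) = (mp l).mul ⟨1,0,-1,1⟩ := by
  intro l
  induction l with
  | nil => intro h; exact absurd rfl h
  | cons x t ih =>
    intro _
    cases t with
    | nil =>
      show mp [x+1] = _
      show (mm (x+1)).mul (mp []) = ((mm x).mul (mp [])).mul _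
      simp [M2.mul, mm, mp]
    | cons y u =>
      show mp (x :: incLast (y :: u)) = _
      show (mm x).mul (mp (incLast (y :: u))) = ((mm x).mul (mp (y :: u))).mul _
      rw [ih (by simp), M2.mul_assoc]




def Sys (nv : ℤ) : ℤ → List ℤ → List ℤ → Prop
  | _, [], [] => True
  | _, [], _ :: _ => False
  | _, _ :: _, [] => False
  | prev, x :: bs, y :: cs => x * y - prev - cs.headI = nv * (x - 2) ∧ Sys nv y bs cs

def sumCB (b c : List ℤ) : ℤ := (List.zipWith (fun x y => y * (x - 2)) b c).sum

lemma headI_getD (c : List ℤ) : c.headI = c.getD 0 0 := by cases c <;> rfl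

lemma getLastD_indep (x : ℤ) (t : List ℤ) (d d' : ℤ) :
    (x :: t).getLastD d = (x :: t).getLastD d' := by
  rw [List.getLastD_cons, List.getLastD_cons]

lemma headI_map_add (k : ℤ) (x : ℤ) (t : List ℤ) :
    ((x :: t).map (· + k)).headI = (x :: t).headI + k := rfl

lemma headI_map_append (k : ℤ) (cs : List ℤ) :
    (cs.map (· + k) ++ [k]).headI = cs.headI + k := by
  cases cs with
  | nil => simp
  | cons y t => rfl

lemma getLastD_map_add (k : ℤ) : ∀ (c : List ℤ) (x : ℤ),
    (c.map (· + k)).getLastD (x + k) = c.getLastD x + k := by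
  intro c
  induction c with
  | nil => intro x; rfl
  | cons y t ih =>
    intro x
    rw [List.map_cons, List.getLastD_cons, List.getLastD_cons, ih]

lemma sysR (m k : ℤ) : ∀ (b c : List ℤ) (prev : ℤ), Sys m prev b c → c.getLastD prev = k →
    Sys (m + k) (prev + k) (b ++ [2]) (c.map (· + k) ++ [k]) := by
  intro b
  induction b with
  | nil =>
    intro c prev hs hl
    cases c with
    | nil =>
      simp only [List.getLastD_nil] at hl
      subst hl
      refine ⟨?_, trivial⟩
      simp [List.headI]
      ring
    | cons y t => exact absurd hs (by simp [Sys])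
  | cons x bs ih =>
    intro c prev hs hl
    cases c with
    | nil => exact absurd hs (by simp [Sys])
    | cons y cs =>
      obtain ⟨hrow, htail⟩ := hs
      rw [List.getLastD_cons] at hl
      refine ⟨?_, ih cs y htail hl⟩
      show x * (y + k) - (prev + k) - (List.map (· + k) cs ++ [k]).headI = (m + k) * (x - 2)
      rw [headI_map_append]
      linear_combination hrow

lemma sysL (m k : ℤ) : ∀ (b c : List ℤ) (prev : ℤ), Sys m prev b c →
    c.getLastD (m - k) = m - k →
    Sys (m + k) (prev + k) (incLast b) (c.map (· + k)) := by
  intro b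
  induction b with
  | nil =>
    intro c prev hs _
    cases c with
    | nil => trivial
    | cons y t => exact absurd hs (by simp [Sys])
  | cons x bs ih =>
    intro c prev hs hl
    cases c with
    | nil => exact absurd hs (by simp [Sys])
    | cons y cs =>
      obtain ⟨hrow, htail⟩ := hs
      cases bs with
      | nil =>
        cases cs with
        | nil =>
          simp only [List.getLastD_cons, List.getLastD_nil] at hl
          refine ⟨?_, trivial⟩
          have hrow' : x * y - prev - 0 = m * (x - 2) := hrow
          show (x+1) * (y+k) - (prev+k) - (0:ℤ) = (m+k) * (x+1-2)
          linear_combination hrow' + hl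
        | cons z cs' => exact absurd htail (by simp [Sys])
      | cons x' bs' =>
        cases cs with
        | nil => exact absurd htail (by simp [Sys])
        | cons z cs' =>
          rw [List.getLastD_cons] at hl
          have hl' : (z :: cs').getLastD (m - k) = m - k := by
            rw [getLastD_indep z cs' (m-k) y]; exact hl
          refine ⟨?_, ih (z :: cs') y htail hl'⟩
          rw [show ((z :: cs').map (· + k)).headI = (z :: cs').headI + k from rfl]
          linear_combination hrow

lemma sys_index (nv : ℤ) : ∀ (b c : List ℤ) (prev : ℤ), Sys nv prev b c → ∀ i, i < b.length →
    (b.getD i 0) * (c.getD i 0) - (if i = 0 then prev else c.getD (i-1) 0) - c.getD (i+1) 0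
      = nv * (b.getD i 0 - 2) := by
  intro b
  induction b with
  | nil => intro c prev _ i hi; simp at hi
  | cons x bs ih =>
    intro c prev hs i hi
    cases c with
    | nil => exact absurd hs (by simp [Sys])
    | cons y cs =>
      obtain ⟨hrow, htail⟩ := hs
      cases i with
      | zero =>
        simp only [List.getD_cons_zero, List.getD_cons_succ]
        rw [if_pos trivial, ← headI_getD]
        exact hrow
      | succ j =>
        have := ih cs y htail j (by simpa using hi)
        simp only [List.getD_cons_succ]
        rw [if_neg (by omega)]
        cases j with
        | zero => simpa using this
        | succ j' =>
          simp only [Nat.add_sub_cancel] at this ⊢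
          rw [List.getD_cons_succ]
          rw [if_neg (by omega)] at this
          exact this

lemma sumCB_map_add (k : ℤ) : ∀ (b c : List ℤ), c.length = b.length →
    sumCB b (c.map (· + k)) = sumCB b c + k * (b.sum - 2 * b.length) := by
  intro b
  induction b with
  | nil => intro c h; simp [sumCB] at *
  | cons x bs ih =>
    intro c h
    cases c with
    | nil => simp at h
    | cons y cs =>
      have := ih cs (by simpa using h)
      simp only [sumCB, List.map_cons, List.zipWith_cons_cons, List.sum_cons,
        List.length_cons, List.sum_cons] at *
      push_cast
      -- push_cast at this
      linarith [this]

lemma sumCB_append_single (v w : ℤ) : ∀ (b c : List ℤ), c.length = b.length →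
    sumCB (b ++ [v]) (c ++ [w]) = sumCB b c + w * (v - 2) := by
  intro b
  induction b with
  | nil =>
    intro c h
    cases c with
    | nil => simp [sumCB]
    | cons y cs => simp at h
  | cons x bs ih =>
    intro c h
    cases c with
    | nil => simp at h
    | cons y cs =>
      have := ih cs (by simpa using h)
      simp only [sumCB, List.cons_append, List.zipWith_cons_cons, List.sum_cons] at *
      linarith [this]

lemma sumCB_incLast : ∀ (b c : List ℤ), c.length = b.length →
    sumCB (incLast b) c = sumCB b c + c.getLastD 0 := by
  intro b
  induction b with
  | nil =>
    intro c h
    cases c with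
    | nil => rfl
    | cons y cs => simp at h
  | cons x bs ih =>
    intro c h
    cases c with
    | nil => simp at h
    | cons y cs =>
      cases bs with
      | nil =>
        have : cs = [] := List.length_eq_zero_iff.mp (by simpa using h)
        subst this
        simp only [incLast, sumCB, List.zipWith_cons_cons, List.zipWith_nil_right,
          List.sum_cons, List.sum_nil, List.getLastD_cons, List.getLastD_nil]
        ring
      | cons x' bs' =>
        cases cs with
        | nil => simp at h
        | cons z cs' =>
          have := ih (z :: cs') (by simpa using h)
          show sumCB (x :: incLast (x' :: bs')) (y :: z :: cs') = _
          simp only [sumCB, List.zipWith_cons_cons, List.sum_cons] at this ⊢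
          rw [List.getLastD_cons, getLastD_indep z cs' y 0]
          linarith [this]

lemma sys_length (nv : ℤ) : ∀ (b c : List ℤ) (prev : ℤ), Sys nv prev b c → c.length = b.length := by
  intro b
  induction b with
  | nil =>
    intro c prev hs
    cases c with
    | nil => rfl
    | cons y t => exact absurd hs (by simp [Sys])
  | cons x bs ih =>
    intro c prev hs
    cases c with
    | nil => exact absurd hs (by simp [Sys])
    | cons y cs => simpa using ih cs y hs.2

lemma hj_mp : ∀ b : List ℤ, (∀ x ∈ b, (2:ℤ) ≤ x) →
    (mp b).c < (mp b).a ∧ 0 ≤ (mp b).c ∧ hj b = ((mp b).a : ℚ) / ((mp b).c : ℚ) := by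
  intro b
  induction b with
  | nil =>
    intro _
    refine ⟨by norm_num [mp], by norm_num [mp], ?_⟩
    show (0 : ℚ) = ((1:ℤ):ℚ) / ((0:ℤ):ℚ)
    norm_num
  | cons x t ih =>
    intro h
    obtain ⟨h1, h2, h3⟩ := ih (fun y hy => h y (List.mem_cons_of_mem x hy))
    have hx : (2:ℤ) ≤ x := h x List.mem_cons_self
    set A := (mp t).a with hA
    set C := (mp t).c with hC
    have hmp : mp (x :: t) = ⟨x*A - C, x*(mp t).b - (mp t).d, A, (mp t).b⟩ := by
      show (mm x).mul (mp t) = _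
      simp [M2.mul, mm]
      constructor
      · ring
      · ring_nf; exact ⟨trivial, rfl⟩
    have hApos : 0 < A := lt_of_le_of_lt h2 h1
    refine ⟨?_, ?_, ?_⟩
    · rw [hmp]
      show A < x*A - C
      nlinarith
    · rw [hmp]; exact le_of_lt hApos
    · rw [hmp]
      show (x : ℚ) - (hj t)⁻¹ = ((x*A - C : ℤ) : ℚ) / ((A : ℤ) : ℚ)
      rw [h3, inv_div]
      have hAq : ((A:ℤ):ℚ) ≠ 0 := by exact_mod_cast hApos.ne'
      field_simp
      push_cast
      rfl

lemma hj_gt_one (x : ℤ) (t : List ℤ) (h : ∀ y ∈ x :: t, (2:ℤ) ≤ y) : 1 < hj (x :: t) := by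
  obtain ⟨h1, h2, h3⟩ := hj_mp (x :: t) h
  have hc1 : 1 ≤ (mp (x :: t)).c := by
    show 1 ≤ ((mm x).mul (mp t)).c
    obtain ⟨g1, g2, g3⟩ := hj_mp t (fun y hy => h y (List.mem_cons_of_mem x hy))
    show (1:ℤ) ≤ 1 * (mp t).a + 0 * (mp t).c
    nlinarith
  rw [h3]
  rw [one_lt_div (by exact_mod_cast lt_of_lt_of_le Int.zero_lt_one hc1)]
  exact_mod_cast h1

lemma hj_unique : ∀ b c : List ℤ, (∀ x ∈ b, (2:ℤ) ≤ x) → (∀ x ∈ c, (2:ℤ) ≤ x) →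
    hj b = hj c → b = c := by
  intro b
  induction b with
  | nil =>
    intro c hb hc he
    cases c with
    | nil => rfl
    | cons y u =>
      exfalso
      have := hj_gt_one y u hc
      rw [← he] at this
      show False
      norm_num [hj] at this
  | cons x t ih =>
    intro c hb hc he
    cases c with
    | nil =>
      exfalso
      have := hj_gt_one x t hb
      rw [he] at this
      norm_num [hj] at this
    | cons y u =>
      have ht2 : ∀ z ∈ t, (2:ℤ) ≤ z := fun z hz => hb z (List.mem_cons_of_mem x hz)
      have hu2 : ∀ z ∈ u, (2:ℤ) ≤ z := fun z hz => hc z (List.mem_cons_of_mem y hz)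
      have hinvb : 0 ≤ (hj t)⁻¹ ∧ (hj t)⁻¹ < 1 := by
        cases t with
        | nil => norm_num [hj]
        | cons z w =>
          have := hj_gt_one z w ht2
          constructor
          · positivity
          · exact inv_lt_one_of_one_lt₀ this
      have hinvc : 0 ≤ (hj u)⁻¹ ∧ (hj u)⁻¹ < 1 := by
        cases u with
        | nil => norm_num [hj]
        | cons z w =>
          have := hj_gt_one z w hu2
          constructor
          · positivity
          · exact inv_lt_one_of_one_lt₀ this
      have he' : (x : ℚ) - (hj t)⁻¹ = (y : ℚ) - (hj u)⁻¹ := he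
      have hxy : x = y := by
        have h1 : ((x - y : ℤ) : ℚ) = (hj t)⁻¹ - (hj u)⁻¹ := by push_cast; linarith
        have h2 : ((x - y : ℤ) : ℚ) < 1 := by rw [h1]; linarith [hinvb.1, hinvb.2, hinvc.1, hinvc.2]
        have h3 : (-1 : ℚ) < ((x - y : ℤ) : ℚ) := by rw [h1]; linarith [hinvb.1, hinvb.2, hinvc.1, hinvc.2]
        have h2' : (x - y : ℤ) < 1 := by exact_mod_cast h2
        have h3' : (-1 : ℤ) < (x - y : ℤ) := by exact_mod_cast h3
        omega
      subst hxy
      have hinv : (hj t)⁻¹ = (hj u)⁻¹ := by linarith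
      have : hj t = hj u := inv_injective hinv
      rw [ih u ht2 hu2 this]


def wc (N A : ℕ) : List ℤ × List ℤ :=
  if h : N ≤ 2 ∨ A = 0 ∨ N ≤ A then ([4], [1])
  else if h2 : 2 * A < N then
    let P := wc (N - A) A
    (incHead P.1 ++ [2], P.2.map (· + (A : ℤ)) ++ [(A : ℤ)])
  else
    let P := wc A (2 * A - N)
    ((2 : ℤ) :: incLast P.1, ((N : ℤ) - (A : ℤ)) :: P.2.map (· + ((N : ℤ) - (A : ℤ))))
termination_by N
decreasing_by all_goals omega

def T2 (n a : ℤ) : M2 := ⟨n^2, -(n*(n-a)-1), n*a-1, -(a*(n-a)-1)⟩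

lemma T2_moveR (n a : ℤ) : ((M2.mk 1 1 0 1).mul (T2 (n-a) a)).mul (mm 2) = T2 n a := by
  simp only [T2, M2.mul, mm, M2.mk.injEq]
  refine ⟨by ring, by ring, by ring, by ring⟩

lemma T2_moveL (n a : ℤ) : (mm 2).mul ((T2 a (2*a-n)).mul ⟨1,0,-1,1⟩) = T2 n a := by
  simp only [T2, M2.mul, mm, M2.mk.injEq]
  refine ⟨by ring, by ring, by ring, by ring⟩

lemma incHead_mem {b : List ℤ} (hb : ∀ x ∈ b, (2:ℤ) ≤ x) : ∀ x ∈ incHead b, (2:ℤ) ≤ x := by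
  cases b with
  | nil => simp [incHead]
  | cons y t =>
    intro x hx
    rcases List.mem_cons.mp hx with h | h
    · have := hb y List.mem_cons_self; omega
    · exact hb x (List.mem_cons_of_mem y h)

lemma incLast_mem : ∀ b : List ℤ, (∀ x ∈ b, (2:ℤ) ≤ x) → ∀ x ∈ incLast b, (2:ℤ) ≤ x := by
  intro b
  induction b with
  | nil => simp [incLast]
  | cons y t ih =>
    intro hb x hx
    cases t with
    | nil =>
      simp only [incLast, List.mem_singleton] at hx
      have := hb y List.mem_cons_self
      omega
    | cons z u =>
      rcases List.mem_cons.mp hx with h | h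
      · exact h ▸ hb y List.mem_cons_self
      · exact ih (fun w hw => hb w (List.mem_cons_of_mem y hw)) x h

lemma incHead_length : ∀ b : List ℤ, (incHead b).length = b.length := by
  intro b; cases b <;> rfl

lemma incLast_length : ∀ b : List ℤ, (incLast b).length = b.length := by
  intro b
  induction b with
  | nil => rfl
  | cons y t ih =>
    cases t with
    | nil => rfl
    | cons z u => simpa [incLast] using ih

lemma incHead_sum : ∀ b : List ℤ, b ≠ [] → (incHead b).sum = b.sum + 1 := by
  intro b hb
  cases b with
  | nil => exact absurd rfl hb
  | cons y t => simp [incHead]; ring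

lemma incLast_sum : ∀ b : List ℤ, b ≠ [] → (incLast b).sum = b.sum + 1 := by
  intro b
  induction b with
  | nil => intro h; exact absurd rfl h
  | cons y t ih =>
    intro _
    cases t with
    | nil => simp [incLast]
    | cons z u =>
      show (y :: incLast (z :: u)).sum = _
      simp only [List.sum_cons, ih (by simp)]
      ring

lemma incHead_ne_nil {b : List ℤ} (hb : b ≠ []) : incHead b ≠ [] := by
  cases b with
  | nil => exact absurd rfl hb
  | cons y t => simp [incHead]

lemma getLastD_append_single (w : ℤ) : ∀ (l : List ℤ) (d : ℤ), (l ++ [w]).getLastD d = w := by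
  intro l
  induction l with
  | nil => intro d; rfl
  | cons x t ih =>
    intro d
    rw [List.cons_append, List.getLastD_cons, ih]

lemma sumCB_cons (x y : ℤ) (bs cs : List ℤ) :
    sumCB (x :: bs) (y :: cs) = y * (x - 2) + sumCB bs cs := rfl

def Inv (N A : ℕ) : Prop :=
  (∀ x ∈ (wc N A).1, (2:ℤ) ≤ x) ∧
  (wc N A).1 ≠ [] ∧
  (wc N A).2.length = (wc N A).1.length ∧
  mp (wc N A).1 = T2 (N:ℤ) (A:ℤ) ∧
  (wc N A).2.headI = (N:ℤ) - (A:ℤ) ∧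
  (wc N A).2.getLastD 0 = (A:ℤ) ∧
  (wc N A).1.sum = 3 * (wc N A).1.length + 1 ∧
  Sys (N:ℤ) 0 (wc N A).1 (wc N A).2 ∧
  sumCB (wc N A).1 (wc N A).2 = (N:ℤ) * (wc N A).1.length

theorem wc_inv (N : ℕ) : ∀ A : ℕ, 0 < A → A < N → Nat.Coprime N A → Inv N A := by
  induction N using Nat.strong_induction_on with
  | _ N ihN =>
  intro A hA hAN hg
  by_cases hN : N ≤ 2
  · -- base case: N = 2, A = 1
    have hN2 : N = 2 := by omega
    have hA1 : A = 1 := by omega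
    subst hN2; subst hA1
    have hw : wc 2 1 = ([4], [1]) := by rw [wc]; simp
    rw [Inv, hw]
    refine ⟨by norm_num, by norm_num, by norm_num, ?_, by norm_num, by norm_num,
      by norm_num, ?_, ?_⟩
    · show (mm 4).mul ⟨1,0,0,1⟩ = T2 2 1
      simp only [mm, M2.mul, T2, M2.mk.injEq]
      norm_num
    · show (4 * 1 - 0 - List.headI [] = (2:ℤ) * (4 - 2)) ∧ Sys 2 1 [] []
      exact ⟨by norm_num [List.headI], trivial⟩
    · show sumCB [4] [1] = 2 * 1
      norm_num [sumCB]
  · by_cases h2 : 2 * A < N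
    · -- move R : from (N - A, A)
      have hcond : ¬(N ≤ 2 ∨ A = 0 ∨ N ≤ A) := by omega
      have hw : wc N A = (incHead (wc (N-A) A).1 ++ [2],
          (wc (N-A) A).2.map (· + (A:ℤ)) ++ [(A:ℤ)]) := by
        rw [wc]; rw [dif_neg hcond, dif_pos h2]
      have hcop : Nat.Coprime (N - A) A := (Nat.coprime_sub_self_left (le_of_lt hAN)).mpr hg
      obtain ⟨o1, o2, o3, o4, o5, o6, o7, o8, o9⟩ := ihN (N - A) (by omega) A hA (by omega) hcop
      set B0 := (wc (N-A) A).1 with hB0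
      set C0 := (wc (N-A) A).2 with hC0
      have hm : ((N - A : ℕ) : ℤ) = (N : ℤ) - (A : ℤ) := by push_cast [Nat.cast_sub (le_of_lt hAN)]; ring
      rw [hm] at o4 o5 o8 o9
      set nn := (N : ℤ) with hnn
      set aa := (A : ℤ) with haa
      -- destructure B0 C0
      obtain ⟨x, bs, hBx⟩ : ∃ x bs, B0 = x :: bs := by
        cases hB : B0 with
        | nil => exact absurd hB o2
        | cons x bs => exact ⟨x, bs, rfl⟩
      obtain ⟨y, cs, hCy⟩ : ∃ y cs, C0 = y :: cs := by
        cases hC : C0 with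
        | nil => rw [hC, hBx] at o3; simp at o3
        | cons y cs => exact ⟨y, cs, rfl⟩
      rw [Inv, hw]
      have hy : y = (nn - aa) - aa := by rw [hCy] at o5; exact o5
      have hlen : cs.length = bs.length := by rw [hBx, hCy] at o3; simpa using o3
      refine ⟨?_, by simp, ?_, ?_, ?_, ?_, ?_, ?_, ?_⟩
      · intro z hz
        rcases List.mem_append.mp hz with h | h
        · exact incHead_mem o1 z h
        · simp at h; omega
      · simp [incHead_length, o3]
      · -- matrix
        rw [mp_append, hBx, mp_incHead, ← hBx, o4]
        show ((M2.mk 1 1 0 1).mul (T2 (nn - aa) aa)).mul (mp [2]) = T2 nn aa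
        have : mp [2] = mm 2 := by
          show (mm 2).mul ⟨1,0,0,1⟩ = mm 2
          simp [M2.mul, mm]
        rw [this, T2_moveR]
      · -- headI
        rw [hCy]
        show ((y + aa) :: (cs.map (· + aa) ++ [aa])).headI = nn - aa
        show y + aa = nn - aa
        omega
      · -- getLastD
        rw [getLastD_append_single]
      · -- sum
        rw [List.sum_append, incHead_sum B0 o2, List.length_append, incHead_length]
        simp only [List.sum_cons, List.sum_nil, List.length_cons, List.length_nil]
        push_cast
        omega
      · -- Sys
        rw [hBx, hCy]
        rw [hBx, hCy] at o8
        obtain ⟨hrow, htail⟩ := o8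
        have hlast : cs.getLastD y = aa := by
          rw [hCy] at o6; rw [List.getLastD_cons] at o6; exact o6
        show Sys nn 0 ((x+1) :: (bs ++ [2])) ((y + aa) :: (cs.map (· + aa) ++ [aa]))
        constructor
        · show (x+1) * (y + aa) - 0 - (cs.map (· + aa) ++ [aa]).headI = nn * (x + 1 - 2)
          rw [headI_map_append]
          linear_combination hrow + hy
        · have h9 := sysR (nn - aa) aa bs cs y htail hlast
          rwa [show nn - aa + aa = nn by ring] at h9
      · -- sumCB
        rw [hBx, hCy]
        show sumCB ((x+1) :: (bs ++ [2])) ((y + aa) :: (cs.map (· + aa) ++ [aa])) = _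
        rw [sumCB_cons, sumCB_append_single 2 aa bs (cs.map (· + aa)) (by simpa using hlen)]
        have hmap := sumCB_map_add aa bs cs hlen
        have ho9 : sumCB (x :: bs) (y :: cs) = (nn - aa) * ((x :: bs).length : ℤ) := by
          rw [← hBx, ← hCy]; exact o9
        have ho7 : ((x :: bs).sum : ℤ) = 3 * ((x :: bs).length : ℤ) + 1 := by
          rw [← hBx]; exact_mod_cast o7
        rw [sumCB_cons] at ho9
        simp only [List.sum_cons, List.length_cons, List.length_append, List.length_nil,
          incHead_length] at ho7 ho9 ⊢
        push_cast at ho7 ho9 hmap ⊢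
        linear_combination hmap + ho9 + aa * ho7 + hy
    · -- move L : from (A, 2A - N)
      have hcond : ¬(N ≤ 2 ∨ A = 0 ∨ N ≤ A) := by omega
      have h2AN : N < 2 * A := by
        rcases Nat.lt_or_ge N (2*A) with h | h
        · exact h
        · exfalso
          have hdvd : A ∣ N := ⟨2, by omega⟩
          have hA1 : A = 1 := hg.symm.eq_one_of_dvd hdvd
          omega
      have hw : wc N A = ((2 : ℤ) :: incLast (wc A (2*A-N)).1,
          ((N:ℤ) - (A:ℤ)) :: (wc A (2*A-N)).2.map (· + ((N:ℤ) - (A:ℤ)))) := by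
        rw [wc]; rw [dif_neg hcond, dif_neg (by omega)]
      have hcop : Nat.Coprime A (2*A - N) := by
        have e : 2*A - N = A - (N - A) := by omega
        rw [e]
        rw [Nat.coprime_self_sub_right (by omega)]
        rw [Nat.coprime_sub_self_right (by omega)]
        exact hg.symm
      obtain ⟨o1, o2, o3, o4, o5, o6, o7, o8, o9⟩ := ihN A hAN (2*A - N) (by omega) (by omega) hcop
      set B0 := (wc A (2*A-N)).1 with hB0
      set C0 := (wc A (2*A-N)).2 with hC0
      have hm : ((2*A - N : ℕ) : ℤ) = 2*(A:ℤ) - (N:ℤ) := by push_cast [Nat.cast_sub (by omega : N ≤ 2*A)]; ring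
      rw [hm] at o4 o5 o6
      set nn := (N : ℤ) with hnn
      set aa := (A : ℤ) with haa
      set k := nn - aa with hk
      obtain ⟨x, bs, hBx⟩ : ∃ x bs, B0 = x :: bs := by
        cases hB : B0 with
        | nil => exact absurd hB o2
        | cons x bs => exact ⟨x, bs, rfl⟩
      obtain ⟨y, cs, hCy⟩ : ∃ y cs, C0 = y :: cs := by
        cases hC : C0 with
        | nil => rw [hC, hBx] at o3; simp at o3
        | cons y cs => exact ⟨y, cs, rfl⟩
      rw [Inv, hw]
      have hy : y = aa - (2*aa - nn) := by rw [hCy] at o5; exact o5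
      have hlen : cs.length = bs.length := by rw [hBx, hCy] at o3; simpa using o3
      refine ⟨?_, by simp, ?_, ?_, ?_, ?_, ?_, ?_, ?_⟩
      · intro z hz
        rcases List.mem_cons.mp hz with h | h
        · omega
        · exact incLast_mem B0 o1 z h
      · simp [incLast_length, o3]
      · -- matrix
        show (mm 2).mul (mp (incLast B0)) = T2 nn aa
        rw [mp_incLast B0 o2, o4]
        exact T2_moveL nn aa
      · rfl
      · -- getLastD
        show (k :: C0.map (· + k)).getLastD 0 = aa
        rw [List.getLastD_cons, hCy]
        have h1 : ((y :: cs).map (· + k)).getLastD ((2*aa - nn) + k) = (y :: cs).getLastD (2*aa - nn) + k :=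
          getLastD_map_add k (y :: cs) (2*aa - nn)
        have h2' : ((y :: cs).map (· + k)).getLastD k = ((y :: cs).map (· + k)).getLastD ((2*aa - nn) + k) := by
          simp only [List.map_cons]
          exact getLastD_indep _ _ _ _
        rw [h2', h1, getLastD_indep y cs (2*aa-nn) 0, ← hCy, o6]
        omega
      · -- sum
        show ((2:ℤ) :: incLast B0).sum = 3 * (((2:ℤ) :: incLast B0).length : ℤ) + 1
        simp only [List.sum_cons, List.length_cons, incLast_sum B0 o2, incLast_length]
        push_cast
        omega
      · -- Sys
        show Sys nn 0 ((2:ℤ) :: incLast B0) (k :: C0.map (· + k))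
        constructor
        · show 2 * k - 0 - (C0.map (· + k)).headI = nn * (2 - 2)
          rw [hCy]
          show 2 * k - 0 - (y + k) = nn * (2 - 2)
          linear_combination -hy
        · have hlastD : C0.getLastD (aa - k) = aa - k := by
            rw [hCy, getLastD_indep y cs (aa - k) 0, ← hCy, o6]
            omega
          have h9 := sysL aa k B0 C0 0 o8 hlastD
          rwa [show aa + k = nn by omega, zero_add] at h9
      · -- sumCB
        show sumCB ((2:ℤ) :: incLast B0) (k :: C0.map (· + k)) = nn * (((2:ℤ) :: incLast B0).length : ℤ)
        rw [hBx, hCy]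
        show sumCB ((2:ℤ) :: incLast (x :: bs)) (k :: (y :: cs).map (· + k)) = _
        rw [show sumCB ((2:ℤ) :: incLast (x :: bs)) (k :: (y :: cs).map (· + k))
            = k * (2 - 2) + sumCB (incLast (x :: bs)) ((y :: cs).map (· + k)) from rfl]
        rw [sumCB_incLast (x :: bs) ((y::cs).map (· + k)) (by simpa using hlen)]
        have hmap := sumCB_map_add k (x :: bs) (y :: cs) (by simpa using hlen)
        have hlast2 : ((y :: cs).map (· + k)).getLastD 0 = (2*aa - nn) + k := by
          have h1 : ((y :: cs).map (· + k)).getLastD ((2*aa - nn) + k) = (y :: cs).getLastD (2*aa - nn) + k :=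
            getLastD_map_add k (y :: cs) (2*aa - nn)
          simp only [List.map_cons]
          rw [getLastD_indep (y+k) (cs.map (· + k)) 0 ((2*aa-nn)+k)]
          simp only [List.map_cons] at h1
          rw [h1, getLastD_indep y cs (2*aa-nn) 0, ← hCy, o6]
        rw [hlast2]
        have ho9 : sumCB (x :: bs) (y :: cs) = aa * ((x :: bs).length : ℤ) := by
          rw [← hBx, ← hCy]; exact o9
        have ho7 : (x :: bs).sum = 3 * ((x :: bs).length : ℤ) + 1 := by
          rw [hBx] at o7; exact_mod_cast o7
        simp only [List.length_cons, incLast_length] at *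
        push_cast at hmap ho9 ho7 ⊢
        linear_combination hmap + ho9 + k * ho7

lemma sumCB_fin : ∀ (b c : List ℤ), c.length = b.length →
    sumCB b c = ∑ i : Fin b.length, (c.getD (i:ℕ) 0) * (b.get i - 2) := by
  intro b
  induction b with
  | nil => intro c h; simp [sumCB]
  | cons x bs ih =>
    intro c h
    cases c with
    | nil => simp at h
    | cons y cs =>
      rw [sumCB_cons, ih cs (by simpa using h)]
      show y * (x - 2) + ∑ i : Fin bs.length, cs.getD (i:ℕ) 0 * (bs.get i - 2)
        = ∑ i : Fin (bs.length + 1), (y :: cs).getD (i:ℕ) 0 * ((x :: bs).get i - 2)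
      rw [Fin.sum_univ_succ]
      rfl

lemma tri_aux (s : ℕ) (bq δ : ℕ → ℚ) (hb : ∀ i < s, 2 ≤ bq i)
    (hrow : ∀ i < s, (if i = 0 then 0 else δ (i-1)) - bq i * δ i + δ (i+1) = 0)
    (hs0 : δ s = 0) (hs : 0 < s) (hpos : 0 < δ 0) : False := by
  have key : ∀ i, i < s →
      0 ≤ (if i = 0 then 0 else δ (i-1)) ∧ (if i = 0 then 0 else δ (i-1)) + δ 0 ≤ δ i := by
    intro i
    induction i with
    | zero => intro _; simp
    | succ j ihj =>
      intro hj
      have hjs : j < s := by omega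
      obtain ⟨g1, g2⟩ := ihj hjs
      have hrj := hrow j hjs
      have hbj := hb j hjs
      have hdj : 0 < δ j := by linarith
      have h2d : 2 * δ j ≤ bq j * δ j := mul_le_mul_of_nonneg_right hbj (le_of_lt hdj)
      rw [if_neg (Nat.succ_ne_zero j), Nat.add_sub_cancel]
      constructor
      · linarith
      · linarith
  obtain ⟨g1, g2⟩ := key (s-1) (by omega)
  have hr := hrow (s-1) (by omega)
  rw [show s-1+1 = s by omega, hs0] at hr
  have hds : 0 < δ (s-1) := by linarith
  have h2d : 2 * δ (s-1) ≤ bq (s-1) * δ (s-1) :=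
    mul_le_mul_of_nonneg_right (hb (s-1) (by omega)) (le_of_lt hds)
  linarith

lemma tri_zero (s : ℕ) (bq δ : ℕ → ℚ) (hb : ∀ i < s, 2 ≤ bq i)
    (hrow : ∀ i < s, (if i = 0 then 0 else δ (i-1)) - bq i * δ i + δ (i+1) = 0)
    (hup : ∀ i, s ≤ i → δ i = 0) : ∀ i, δ i = 0 := by
  have h0 : δ 0 = 0 := by
    by_cases hs : 0 < s
    · rcases lt_trichotomy (δ 0) 0 with h | h | h
      · exfalso
        apply tri_aux s bq (fun i => -δ i) hb ?_ (by simp [hup s le_rfl]) hs (by simpa using h)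
        intro i hi
        have h' := hrow i hi
        show (if i = 0 then (0:ℚ) else -δ (i-1)) - bq i * (-δ i) + (-δ (i+1)) = 0
        by_cases h0 : i = 0
        · subst h0
          rw [if_pos rfl] at h' ⊢
          linear_combination -h'
        · rw [if_neg h0] at h' ⊢
          linear_combination -h'
      · exact h
      · exact absurd (tri_aux s bq δ hb hrow (hup s le_rfl) hs h) not_false
    · exact hup 0 (by omega)
  intro i
  induction i using Nat.strong_induction_on with
  | _ i ih =>
    rcases Nat.eq_zero_or_pos i with rfl | hi
    · exact h0
    by_cases his : s ≤ i
    · exact hup i his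
    have hrm := hrow (i-1) (by omega)
    have e1 : δ (i-1) = 0 := ih (i-1) (by omega)
    have e2 : (if i-1 = 0 then (0:ℚ) else δ (i-1-1)) = 0 := by
      by_cases h : i-1 = 0
      · simp [h]
      · rw [if_neg h]; exact ih (i-1-1) (by omega)
    rw [show i-1+1 = i by omega, e1, e2] at hrm
    linarith

lemma sum_row {s : ℕ} (M : Matrix (Fin s) (Fin s) ℚ) (bv : Fin s → ℚ)
    (hM : ∀ i j : Fin s, M i j = if i = j then -(bv i)
      else if (i:ℕ)+1 = (j:ℕ) ∨ (j:ℕ)+1 = (i:ℕ) then 1 else 0)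
    (x : Fin s → ℚ) (xe : ℕ → ℚ) (hxe : ∀ k, xe k = if h : k < s then x ⟨k,h⟩ else 0)
    (i : Fin s) :
    ∑ j, M i j * x j
      = (if (i:ℕ) = 0 then 0 else xe ((i:ℕ)-1)) - bv i * x i + xe ((i:ℕ)+1) := by
  have key : ∀ j : Fin s, M i j * x j =
      (if j = i then -(bv i) * x j else 0)
      + ((if (i:ℕ)+1 = (j:ℕ) then x j else 0) + (if (j:ℕ)+1 = (i:ℕ) then x j else 0)) := by
    intro j
    rw [hM i j]
    by_cases h1 : i = j
    · subst h1
      rw [if_pos rfl, if_pos (rfl : i = i),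
          if_neg (show ¬((i:ℕ)+1 = (i:ℕ)) by omega)]
      ring
    · rw [if_neg h1, if_neg (show ¬(j = i) from fun hh => h1 hh.symm)]
      by_cases h2 : (i:ℕ)+1 = (j:ℕ)
      · rw [if_pos (Or.inl h2 : (i:ℕ)+1 = (j:ℕ) ∨ (j:ℕ)+1 = (i:ℕ)), if_pos h2,
            if_neg (show ¬((j:ℕ)+1 = (i:ℕ)) by omega)]
        ring
      · by_cases h3 : (j:ℕ)+1 = (i:ℕ)
        · rw [if_pos (Or.inr h3 : (i:ℕ)+1 = (j:ℕ) ∨ (j:ℕ)+1 = (i:ℕ)), if_neg h2, if_pos h3]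
          ring
        · rw [if_neg (show ¬((i:ℕ)+1 = (j:ℕ) ∨ (j:ℕ)+1 = (i:ℕ)) by tauto), if_neg h2, if_neg h3]
          ring
  rw [Finset.sum_congr rfl (fun j _ => key j), Finset.sum_add_distrib, Finset.sum_add_distrib]
  have e1 : (∑ j : Fin s, if j = i then -(bv i) * x j else 0) = -(bv i) * x i := by
    rw [Finset.sum_ite_eq' Finset.univ i (fun j => -(bv i) * x j)]
    simp
  have e2 : (∑ j : Fin s, if (i:ℕ)+1 = (j:ℕ) then x j else 0) = xe ((i:ℕ)+1) := by
    by_cases h : (i:ℕ)+1 < s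
    · have hcond : ∀ j : Fin s, ((i:ℕ)+1 = (j:ℕ)) = (j = ⟨(i:ℕ)+1, h⟩) := by
        intro j
        apply propext
        constructor
        · intro hh; exact Fin.ext hh.symm
        · intro hh; rw [hh]
      simp only [hcond]
      rw [Finset.sum_ite_eq' Finset.univ (⟨(i:ℕ)+1, h⟩ : Fin s) x]
      rw [hxe, dif_pos h]
      simp
    · have hcond : ∀ j : Fin s, ¬((i:ℕ)+1 = (j:ℕ)) := fun j hh => by
        have := j.isLt; omega
      rw [Finset.sum_eq_zero (fun j _ => by rw [if_neg (hcond j)]), hxe, dif_neg h]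
  have e3 : (∑ j : Fin s, if (j:ℕ)+1 = (i:ℕ) then x j else 0)
      = (if (i:ℕ) = 0 then 0 else xe ((i:ℕ)-1)) := by
    by_cases hi0 : (i:ℕ) = 0
    · rw [if_pos hi0]
      exact Finset.sum_eq_zero (fun j _ => by rw [if_neg (by omega)])
    · have h : (i:ℕ)-1 < s := by have := i.isLt; omega
      have hcond : ∀ j : Fin s, ((j:ℕ)+1 = (i:ℕ)) = (j = ⟨(i:ℕ)-1, h⟩) := by
        intro j
        apply propext
        constructor
        · intro hh
          apply Fin.ext
          show (j:ℕ) = (i:ℕ)-1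
          omega
        · intro hh
          subst hh
          show ((i:ℕ)-1)+1 = (i:ℕ)
          omega
      simp only [hcond]
      rw [Finset.sum_ite_eq' Finset.univ (⟨(i:ℕ)-1, h⟩ : Fin s) x]
      rw [if_neg hi0, hxe, dif_pos h]
      simp
  rw [e1, e2, e3]
  ring

end WahlAux

open WahlAux in
/-- For a Wahl chain [b₁,...,bₛ] = n²/(na−1), with intersection matrix M
(M_{ii} = −bᵢ, M_{i,i±1} = 1, 0 otherwise) and discrepancies d solving
∑_j M_{ij} d_j = bᵢ − 2, one has ∑ᵢ dᵢ (bᵢ − 2) = −s. -/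
theorem wahl_discrepancy_sum (n a : ℤ) (hcop : IsCoprime n a) (ha : 0 < a) (han : a < n)
    (b : List ℤ) (hb2 : ∀ x ∈ b, 2 ≤ x)
    (hval : hj b = (n : ℚ)^2 / ((n : ℚ) * a - 1))
    (M : Matrix (Fin b.length) (Fin b.length) ℚ)
    (hM : ∀ i j : Fin b.length, M i j =
      if i = j then -(b.get i : ℚ)
      else if (i : ℕ) + 1 = j ∨ (j : ℕ) + 1 = i then 1 else 0)
    (d : Fin b.length → ℚ)
    (hd : ∀ i : Fin b.length, ∑ j, M i j * d j = (b.get i : ℚ) - 2) :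
    ∑ i, d i * ((b.get i : ℚ) - 2) = -(b.length : ℚ) := by
  have hn : 0 < n := lt_trans ha han
  set N := n.natAbs with hNdef
  set A := a.natAbs with hAdef
  have hNn : (N : ℤ) = n := Int.natAbs_of_nonneg hn.le
  have hAa : (A : ℤ) = a := Int.natAbs_of_nonneg ha.le
  have hg : Nat.Coprime N A := Int.isCoprime_iff_gcd_eq_one.mp hcop
  have h0A : 0 < A := by
    have : (0:ℤ) < (A:ℤ) := by rw [hAa]; exact ha
    exact_mod_cast this
  have hANlt : A < N := by
    have : (A:ℤ) < (N:ℤ) := by rw [hAa, hNn]; exact han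
    exact_mod_cast this
  obtain ⟨o1, o2, o3, o4, o5, o6, o7, o8, o9⟩ := wc_inv N A h0A hANlt hg
  -- identify b with the Wahl chain
  have hhjW : hj (wc N A).1 = (n : ℚ)^2 / ((n : ℚ) * a - 1) := by
    obtain ⟨p1, p2, p3⟩ := hj_mp (wc N A).1 o1
    rw [p3, o4]
    show ((((N:ℤ))^2 : ℤ) : ℚ) / ((((N:ℤ)) * ((A:ℤ)) - 1 : ℤ) : ℚ) = _
    rw [hNn, hAa]
    push_cast
    ring
  have hbW : b = (wc N A).1 := hj_unique b (wc N A).1 hb2 o1 (by rw [hval, hhjW])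
  set C := (wc N A).2 with hC
  rw [← hbW] at o3 o8 o9
  rw [hNn] at o8 o9
  have hnq : (n : ℚ) ≠ 0 := by exact_mod_cast hn.ne'
  -- extended functions
  set D : ℕ → ℚ := fun k => if h : k < b.length then d ⟨k, h⟩ else 0 with hD
  set X : ℕ → ℚ := fun k => -((C.getD k 0 : ℤ) : ℚ) / (n : ℚ) with hX
  set bq : ℕ → ℚ := fun k => ((b.getD k 0 : ℤ) : ℚ) with hbq
  have hb2' : ∀ k, k < b.length → 2 ≤ bq k := by
    intro k hk
    have hmem : b.getD k 0 ∈ b := by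
      rw [List.getD_eq_getElem b 0 hk]
      exact List.getElem_mem hk
    have := hb2 _ hmem
    show (2:ℚ) ≤ ((b.getD k 0 : ℤ) : ℚ)
    exact_mod_cast this
  have hget : ∀ k (hk : k < b.length), (b.get ⟨k, hk⟩ : ℚ) = bq k := by
    intro k hk
    show ((b.get ⟨k, hk⟩ : ℤ) : ℚ) = ((b.getD k 0 : ℤ) : ℚ)
    rw [List.getD_eq_getElem b 0 hk]
    rfl
  -- rows for D
  have hrowD : ∀ k, k < b.length →
      (if k = 0 then 0 else D (k-1)) - bq k * D k + D (k+1) = bq k - 2 := by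
    intro k hk
    have hi := hd ⟨k, hk⟩
    rw [sum_row M (fun i => (b.get i : ℚ)) hM d D (fun k => rfl) ⟨k, hk⟩] at hi
    have hDk : D k = d ⟨k, hk⟩ := by simp only [hD]; rw [dif_pos hk]
    rw [← hDk, hget k hk] at hi
    exact hi
  -- rows for X
  have hrowX : ∀ k, k < b.length →
      (if k = 0 then 0 else X (k-1)) - bq k * X k + X (k+1) = bq k - 2 := by
    intro k hk
    have h' := sys_index n b C 0 o8 k hk
    have hq : ∀ j : ℕ, ((b.getD k 0 : ℤ):ℚ) * ((C.getD k 0 : ℤ):ℚ)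
        - (if k = 0 then 0 else ((C.getD (k-1) 0 : ℤ):ℚ))
        - ((C.getD (k+1) 0 : ℤ):ℚ) = (n:ℚ) * (((b.getD k 0 : ℤ):ℚ) - 2) := by
      intro _
      by_cases hk0 : k = 0
      · rw [if_pos hk0]; rw [if_pos hk0] at h'; exact_mod_cast h'
      · rw [if_neg hk0]; rw [if_neg hk0] at h'; exact_mod_cast h'
    have hq0 := hq 0
    by_cases hk0 : k = 0
    · rw [if_pos hk0] at hq0 ⊢
      simp only [hX, hbq]
      have comb : -(((C.getD (k-1) 0 : ℤ):ℚ))/(n:ℚ) - ((b.getD k 0 : ℤ):ℚ) * (-(((C.getD k 0 : ℤ):ℚ))/(n:ℚ))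
          + -(((C.getD (k+1) 0 : ℤ):ℚ))/(n:ℚ)
          = (-(((C.getD (k-1) 0 : ℤ):ℚ)) + ((b.getD k 0 : ℤ):ℚ) * ((C.getD k 0 : ℤ):ℚ)
            - ((C.getD (k+1) 0 : ℤ):ℚ))/(n:ℚ) := by ring
      have comb0 : (0:ℚ) - ((b.getD k 0 : ℤ):ℚ) * (-(((C.getD k 0 : ℤ):ℚ))/(n:ℚ))
          + -(((C.getD (k+1) 0 : ℤ):ℚ))/(n:ℚ)
          = (((b.getD k 0 : ℤ):ℚ) * ((C.getD k 0 : ℤ):ℚ)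
            - ((C.getD (k+1) 0 : ℤ):ℚ))/(n:ℚ) := by ring
      rw [comb0, div_eq_iff hnq]
      linear_combination hq0
    · rw [if_neg hk0] at hq0 ⊢
      simp only [hX, hbq]
      have comb : -(((C.getD (k-1) 0 : ℤ):ℚ))/(n:ℚ) - ((b.getD k 0 : ℤ):ℚ) * (-(((C.getD k 0 : ℤ):ℚ))/(n:ℚ))
          + -(((C.getD (k+1) 0 : ℤ):ℚ))/(n:ℚ)
          = (-(((C.getD (k-1) 0 : ℤ):ℚ)) + ((b.getD k 0 : ℤ):ℚ) * ((C.getD k 0 : ℤ):ℚ)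
            - ((C.getD (k+1) 0 : ℤ):ℚ))/(n:ℚ) := by ring
      rw [comb, div_eq_iff hnq]
      linear_combination hq0
  -- difference is zero
  set δ : ℕ → ℚ := fun k => D k - X k with hδ
  have hrowδ : ∀ k, k < b.length →
      (if k = 0 then 0 else δ (k-1)) - bq k * δ k + δ (k+1) = 0 := by
    intro k hk
    have h1 := hrowD k hk
    have h2 := hrowX k hk
    show (if k = 0 then 0 else D (k-1) - X (k-1)) - bq k * (D k - X k) + (D (k+1) - X (k+1)) = 0
    by_cases hk0 : k = 0
    · rw [if_pos hk0] at h1 h2 ⊢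
      linear_combination h1 - h2
    · rw [if_neg hk0] at h1 h2 ⊢
      linear_combination h1 - h2
  have hup : ∀ k, b.length ≤ k → δ k = 0 := by
    intro k hk
    show D k - X k = 0
    have hD0 : D k = 0 := by simp only [hD]; rw [dif_neg (by omega)]
    have hC0 : C.getD k 0 = 0 := by
      apply List.getD_eq_default
      omega
    have hX0 : X k = 0 := by simp only [hX]; rw [hC0]; simp
    rw [hD0, hX0]; ring
  have hall := tri_zero b.length bq δ hb2' hrowδ hup
  have hdX : ∀ i : Fin b.length, d i = -((C.getD (i:ℕ) 0 : ℤ):ℚ) / (n:ℚ) := by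
    intro i
    have h5 : D (i:ℕ) - X (i:ℕ) = 0 := hall (i:ℕ)
    have hDi : D (i:ℕ) = d i := by simp only [hD]; rw [dif_pos i.isLt]
    have hXi : X (i:ℕ) = -((C.getD (i:ℕ) 0 : ℤ):ℚ) / (n:ℚ) := by simp only [hX]
    rw [hDi, hXi] at h5
    linarith
  -- final sum
  have hsumZ : (∑ i : Fin b.length, (C.getD (i:ℕ) 0) * (b.get i - 2)) = n * (b.length : ℤ) := by
    rw [← sumCB_fin b C o3]
    exact o9
  have hsumQ : (∑ i : Fin b.length, ((C.getD (i:ℕ) 0 : ℤ):ℚ) * ((b.get i : ℚ) - 2))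
      = (n:ℚ) * (b.length : ℚ) := by
    have h6 := congrArg (fun z : ℤ => (z : ℚ)) hsumZ
    push_cast at h6
    exact_mod_cast hsumZ
  calc ∑ i : Fin b.length, d i * ((b.get i : ℚ) - 2)
      = ∑ i : Fin b.length, -(((C.getD (i:ℕ) 0 : ℤ):ℚ) * ((b.get i : ℚ) - 2)) / (n:ℚ) := by
        apply Finset.sum_congr rfl
        intro i _
        rw [hdX i]
        ring
    _ = -(∑ i : Fin b.length, ((C.getD (i:ℕ) 0 : ℤ):ℚ) * ((b.get i : ℚ) - 2)) / (n:ℚ) := by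
        rw [← Finset.sum_div, ← Finset.sum_neg_distrib]
    _ = -(b.length : ℚ) := by
        rw [hsumQ]
        field_simp
end
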